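/- arXiv:0806.0638 — 7 statements merged into one kernel-verified Lean document; each statement's English description precedes it below -/
import Mathlib

section
/- Let M be a commutative Poisson algebra, let B ⊆ D be multiplicative subalgebras of M, and let I be a multiplicative ideal of M. Assume the images of B and D under the projection M → M/I are equal, that {B, I ∩ D} ⊆ I, and that {B, B} ⊆ D. Then the bracket on B/(B ∩ I) defined by sending the classes of f, g ∈ B to the class of {f, g} in D/(D ∩ I) = B/(B ∩ I) is well defined, i.e. if f − f′ ∈ B ∩ I and g ∈ B then {f, g} − {f′, g} ∈ I. -/
/-- in the algebraic Marsden–Ratiu reduction setting (`B ⊆ D`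
multiplicative subalgebras, `I` a multiplicative ideal, equal images of `B` and `D` in
`M/I`, `{B, I ∩ D} ⊆ I` and `{B, B} ⊆ D`), the induced bracket on `B/(B ∩ I)` is well
defined: if `f − f′ ∈ B ∩ I` and `g ∈ B` then `{f, g} − {f′, g} ∈ I`. -/
theorem reduced_bracket_well_defined
    {M : Type*} [CommRing M]
    (bracket : M → M → M)
    (hadd_left : ∀ f g h : M, bracket (f + g) h = bracket f h + bracket g h)
    (hadd_right : ∀ f g h : M, bracket f (g + h) = bracket f g + bracket f h)
    (hskew : ∀ f g : M, bracket f g = - bracket g f)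
    (hjacobi : ∀ f g h : M,
      bracket (bracket f g) h + bracket (bracket g h) f + bracket (bracket h f) g = 0)
    (hleibniz : ∀ f g h : M, bracket f (g * h) = bracket f g * h + g * bracket f h)
    (B D : Subring M) (hBD : (B : Set M) ⊆ D)
    (I : Ideal M)
    -- equal images of B and D in M/I (the inclusion B ⊆ D gives the other direction)
    (himg : ∀ d ∈ D, ∃ b ∈ B, d - b ∈ I)
    -- {B, I ∩ D} ⊆ I
    (hBID : ∀ f ∈ B, ∀ j, j ∈ I → j ∈ D → bracket f j ∈ I)
    -- {B, B} ⊆ D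
    (hBB : ∀ f ∈ B, ∀ g ∈ B, bracket f g ∈ D)
    (f f' g : M) (hf : f ∈ B) (hf' : f' ∈ B) (hg : g ∈ B)
    (hdiff : f - f' ∈ I) :
    bracket f g - bracket f' g ∈ I := by
  have hD : f - f' ∈ D := by
    have : (f - f' : M) ∈ B := sub_mem hf hf'
    exact hBD this
  have h1 : bracket g (f - f') ∈ I := hBID g hg _ hdiff hD
  have h2 : bracket (f - f') g ∈ I := by
    rw [hskew]; exact neg_mem h1
  have key : bracket f g = bracket (f - f') g + bracket f' g := by
    conv_lhs => rw [← sub_add_cancel f f']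
    exact hadd_left _ _ _
  rw [key, add_sub_cancel_right]
  exact h2
end

section
/- Let M be a commutative Poisson algebra, B ⊆ D multiplicative subalgebras of M, and I a multiplicative ideal of M. Assume the images of B and D in M/I coincide, {B, I ∩ D} ⊆ I, and {B, B} ⊆ D. Then the induced bracket on B/(B ∩ I), defined by [f̄, ḡ] := class of {f, g} (using the identification D/(D∩I) = B/(B∩I)), is a Poisson bracket: it is bilinear, antisymmetric, satisfies the Leibniz rule with respect to the induced multiplication, and satisfies the Jacobi identity. -/
/-- algebraic extended Marsden–Ratiu reduction.  Under the hypotheses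
(`B ⊆ D` multiplicative subalgebras, `I` a multiplicative ideal, equal images of `B`
and `D` in `M/I`, `{B, I ∩ D} ⊆ I`, `{B, B} ⊆ D`), the induced bracket on `B/(B ∩ I)`,
`[f̄, ḡ] := class of {f, g}` (via the identification `D/(D∩I) = B/(B∩I)`), is a Poisson
bracket: it is additive (hence bilinear) mod `I`, antisymmetric mod `I`, satisfies the
Leibniz rule mod `I`, and satisfies the Jacobi identity mod `I` (stated with arbitrary
`B`-representatives of the brackets). -/
theorem reduced_bracket_is_poisson
    {M : Type*} [CommRing M]
    (bracket : M → M → M)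
    (hadd_left : ∀ f g h : M, bracket (f + g) h = bracket f h + bracket g h)
    (hadd_right : ∀ f g h : M, bracket f (g + h) = bracket f g + bracket f h)
    (hskew : ∀ f g : M, bracket f g = - bracket g f)
    (hjacobi : ∀ f g h : M,
      bracket (bracket f g) h + bracket (bracket g h) f + bracket (bracket h f) g = 0)
    (hleibniz : ∀ f g h : M, bracket f (g * h) = bracket f g * h + g * bracket f h)
    (B D : Subring M) (hBD : (B : Set M) ⊆ D)
    (I : Ideal M)
    (himg : ∀ d ∈ D, ∃ b ∈ B, d - b ∈ I)
    (hBID : ∀ f ∈ B, ∀ j, j ∈ I → j ∈ D → bracket f j ∈ I)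
    (hBB : ∀ f ∈ B, ∀ g ∈ B, bracket f g ∈ D) :
    -- bilinearity mod I
    (∀ f f' g : M, f ∈ B → f' ∈ B → g ∈ B →
      bracket (f + f') g - (bracket f g + bracket f' g) ∈ I) ∧
    -- antisymmetry mod I
    (∀ f g : M, f ∈ B → g ∈ B → bracket f g + bracket g f ∈ I) ∧
    -- Leibniz rule mod I
    (∀ f g h : M, f ∈ B → g ∈ B → h ∈ B →
      bracket f (g * h) - (bracket f g * h + g * bracket f h) ∈ I) ∧
    -- Jacobi identity mod I, with B-representatives of the inner brackets
    (∀ f g h kfg kgh khf : M, f ∈ B → g ∈ B → h ∈ B →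
      kfg ∈ B → kgh ∈ B → khf ∈ B →
      kfg - bracket f g ∈ I → kgh - bracket g h ∈ I → khf - bracket h f ∈ I →
      bracket kfg h + bracket kgh f + bracket khf g ∈ I) := by
  refine ⟨?_, ?_, ?_, ?_⟩
  · intro f f' g _ _ _
    rw [hadd_left]; simp
  · intro f g _ _
    rw [hskew f g]; simp
  · intro f g h _ _ _
    rw [hleibniz]; simp
  · intro f g h kfg kgh khf hf hg hh hkfg hkgh hkhf h1 h2 h3
    have e1 : bracket kfg h = bracket (bracket f g) h + bracket (kfg - bracket f g) h := by
      rw [← hadd_left]; ring_nf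
    have e2 : bracket kgh f = bracket (bracket g h) f + bracket (kgh - bracket g h) f := by
      rw [← hadd_left]; ring_nf
    have e3 : bracket khf g = bracket (bracket h f) g + bracket (khf - bracket h f) g := by
      rw [← hadd_left]; ring_nf
    have i1 : bracket (kfg - bracket f g) h ∈ I := by
      rw [hskew]
      exact I.neg_mem (hBID h hh _ h1 (D.sub_mem (hBD hkfg) (hBB f hf g hg)))
    have i2 : bracket (kgh - bracket g h) f ∈ I := by
      rw [hskew]
      exact I.neg_mem (hBID f hf _ h2 (D.sub_mem (hBD hkgh) (hBB g hg h hh)))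
    have i3 : bracket (khf - bracket h f) g ∈ I := by
      rw [hskew]
      exact I.neg_mem (hBID g hg _ h3 (D.sub_mem (hBD hkhf) (hBB h hh f hf)))
    rw [e1, e2, e3]
    have : bracket (bracket f g) h + bracket (kfg - bracket f g) h +
        (bracket (bracket g h) f + bracket (kgh - bracket g h) f) +
        (bracket (bracket h f) g + bracket (khf - bracket h f) g) =
        (bracket (bracket f g) h + bracket (bracket g h) f + bracket (bracket h f) g) +
        (bracket (kfg - bracket f g) h + bracket (kgh - bracket g h) f +
          bracket (khf - bracket h f) g) := by ring
    rw [this, hjacobi, zero_add]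
    exact I.add_mem (I.add_mem i1 i2) i3
end

section
/- Let (V, ω) be a finite-dimensional symplectic vector space and let N, G ⊆ V be linear subspaces such that G ⊆ G^ω (G is isotropic) and V = N ⊕ G^ω. Then N^ω ∩ (G^ω ∩ (N + G)) = N^ω ∩ G. -/
open Submodule

/-- The symplectic orthogonal of a subspace `W` with respect to a bilinear form `ω`. -/
def symplOrth {K V : Type*} [Field K] [AddCommGroup V] [Module K V]
    (ω : V →ₗ[K] V →ₗ[K] K) (W : Submodule K V) : Submodule K V where
  carrier := {v | ∀ w ∈ W, ω v w = 0}
  add_mem' := by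
    intro a b ha hb w hw
    simp [map_add, ha w hw, hb w hw]
  zero_mem' := by
    intro w hw
    simp
  smul_mem' := by
    intro c a ha w hw
    simp [map_smul, ha w hw]

/-- if `G` is isotropic and `V = N ⊕ G^ω`, then
`N^ω ∩ (G^ω ∩ (N + G)) = N^ω ∩ G`. -/
theorem orth_inter_eq
    {K V : Type*} [Field K] [AddCommGroup V] [Module K V] [FiniteDimensional K V]
    (ω : V →ₗ[K] V →ₗ[K] K)
    (hskew : ∀ v w : V, ω v w = - ω w v)
    (hnondeg : ∀ v : V, (∀ w : V, ω v w = 0) → v = 0)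
    (N G : Submodule K V)
    (hiso : G ≤ symplOrth ω G)
    (hcompl : IsCompl N (symplOrth ω G)) :
    symplOrth ω N ⊓ (symplOrth ω G ⊓ (N ⊔ G)) = symplOrth ω N ⊓ G := by
  apply le_antisymm
  · rintro x ⟨hxN, hxGo, hxNG⟩
    obtain ⟨n, hn, g, hg, rfl⟩ := mem_sup.mp hxNG
    have hnGo : n ∈ symplOrth ω G := by
      have h := Submodule.sub_mem _ hxGo (hiso hg)
      simpa using h
    have hn0 : n = 0 := by
      have h : n ∈ N ⊓ symplOrth ω G := ⟨hn, hnGo⟩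
      simpa [hcompl.inf_eq_bot] using h
    exact ⟨hxN, by simpa [hn0] using hg⟩
  · rintro x ⟨hxN, hxG⟩
    exact ⟨hxN, hiso hxG, mem_sup_right hxG⟩
end

section
/- Let (V, ω) be a finite-dimensional symplectic vector space and let N, G ⊆ V be linear subspaces with G ⊆ G^ω and V = N ⊕ G^ω. Then N^ω ∩ G = (N + G^ω)^ω = {0}; in particular N^ω ∩ (N + G)^ω ∩ (N+G) ⊆ N^ω ∩ G^ω ∩ (N+G) = {0}, so the restriction of ω to the subspace N + G is nondegenerate, i.e. N + G is a symplectic subspace of V. -/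
open Submodule

/-- if `G` is isotropic and `V = N ⊕ G^ω`, then
`N^ω ∩ G = (N + G^ω)^ω = {0}`; consequently
`(N + G) ∩ (N + G)^ω = {0}`, i.e. `N + G` is a symplectic subspace of `V`. -/
theorem sum_is_symplectic
    {K V : Type*} [Field K] [AddCommGroup V] [Module K V] [FiniteDimensional K V]
    (ω : V →ₗ[K] V →ₗ[K] K)
    (hskew : ∀ v w : V, ω v w = - ω w v)
    (hnondeg : ∀ v : V, (∀ w : V, ω v w = 0) → v = 0)
    (N G : Submodule K V)
    (hiso : G ≤ symplOrth ω G)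
    (hcompl : IsCompl N (symplOrth ω G)) :
    symplOrth ω N ⊓ G = symplOrth ω (N ⊔ symplOrth ω G) ∧
    symplOrth ω N ⊓ G = ⊥ ∧
    (N ⊔ G) ⊓ symplOrth ω (N ⊔ G) = ⊥ := by
  have htop : N ⊔ symplOrth ω G = ⊤ := hcompl.codisjoint.eq_top
  -- any x ∈ N^ω ∩ G is zero
  have hkey : ∀ x, x ∈ symplOrth ω N ⊓ G → x = 0 := by
    intro x hx
    obtain ⟨hxN, hxG⟩ := hx
    apply hnondeg
    intro w
    have hw : w ∈ N ⊔ symplOrth ω G := htop ▸ mem_top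
    obtain ⟨n, hn, h, hh, rfl⟩ := Submodule.mem_sup.mp hw
    have h1 : ω x n = 0 := hxN n hn
    have h2 : ω x h = 0 := by
      rw [hskew x h]
      simp [hh x hxG]
    simp [h1, h2]
  have hbot : symplOrth ω N ⊓ G = ⊥ := by
    apply eq_bot_iff.mpr
    intro x hx
    exact (mem_bot K).mpr (hkey x hx)
  have hOrthTop : symplOrth ω (N ⊔ symplOrth ω G) = ⊥ := by
    rw [htop]
    apply eq_bot_iff.mpr
    intro x hx
    exact (mem_bot K).mpr (hnondeg x fun w => hx w trivial)
  refine ⟨by rw [hbot, hOrthTop], hbot, ?_⟩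
  apply eq_bot_iff.mpr
  intro x hx
  obtain ⟨hxNG, hxOrth⟩ := hx
  -- x ∈ N^ω and x ∈ G^ω
  have hxNo : x ∈ symplOrth ω N := fun w hw => hxOrth w (le_sup_left (a := N) (b := G) hw)
  have hxGo : x ∈ symplOrth ω G := fun w hw => hxOrth w (le_sup_right (a := N) (b := G) hw)
  obtain ⟨n, hn, g, hg, rfl⟩ := Submodule.mem_sup.mp hxNG
  have hnGo : n ∈ symplOrth ω G := by
    have : n = (n + g) - g := by abel
    rw [this]
    exact sub_mem hxGo (hiso hg)
  have hn0 : n = 0 := by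
    have := hcompl.disjoint.le_bot ⟨hn, hnGo⟩
    simpa using this
  subst hn0
  rw [zero_add] at hxNo ⊢
  exact (mem_bot K).mpr (hkey g ⟨hxNo, hg⟩)
end

section
/- Let (V, ω) be a finite-dimensional symplectic vector space and N, G ⊆ V subspaces with G ⊆ G^ω and V = N ⊕ G^ω. Set B := G + (N + G)^ω. Then B is a direct sum B = G ⊕ (N + G)^ω, and B ∩ N = {0}. -/
open Submodule

theorem symplOrth_mem {K V : Type*} [Field K] [AddCommGroup V] [Module K V]
    (ω : V →ₗ[K] V →ₗ[K] K) (W : Submodule K V) (v : V) :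
    v ∈ symplOrth ω W ↔ ∀ w ∈ W, ω v w = 0 := Iff.rfl

theorem symplOrth_anti {K V : Type*} [Field K] [AddCommGroup V] [Module K V]
    (ω : V →ₗ[K] V →ₗ[K] K) {W W' : Submodule K V} (h : W ≤ W') :
    symplOrth ω W' ≤ symplOrth ω W := fun v hv w hw => hv w (h hw)

/-- with `G` isotropic and `V = N ⊕ G^ω`, the subspace
`B := G + (N + G)^ω` is a direct sum `G ⊕ (N + G)^ω` and satisfies `B ∩ N = {0}`. -/
theorem slice_subbundle_properties
    {K V : Type*} [Field K] [AddCommGroup V] [Module K V] [FiniteDimensional K V]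
    (ω : V →ₗ[K] V →ₗ[K] K)
    (hskew : ∀ v w : V, ω v w = - ω w v)
    (hnondeg : ∀ v : V, (∀ w : V, ω v w = 0) → v = 0)
    (N G : Submodule K V)
    (hiso : G ≤ symplOrth ω G)
    (hcompl : IsCompl N (symplOrth ω G)) :
    G ⊓ symplOrth ω (N ⊔ G) = ⊥ ∧
    (G ⊔ symplOrth ω (N ⊔ G)) ⊓ N = ⊥ := by
  constructor
  · rw [eq_bot_iff]
    rintro v ⟨hvG, hvO⟩
    have : v = 0 := by
      apply hnondeg
      intro w
      have hw : w ∈ N ⊔ symplOrth ω G := hcompl.sup_eq_top ▸ mem_top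
      obtain ⟨n, hn, u, hu, rfl⟩ := Submodule.mem_sup.mp hw
      have h1 : ω v n = 0 := hvO n (Submodule.mem_sup_left hn)
      have h2 : ω v u = 0 := by
        rw [hskew]
        simp [hu v hvG]
      simp [h1, h2]
    simp [this]
  · rw [eq_bot_iff]
    rintro x ⟨hxB, hxN⟩
    obtain ⟨g, hg, h, hh, rfl⟩ := Submodule.mem_sup.mp hxB
    have hx : g + h ∈ symplOrth ω G := by
      intro w hw
      have h1 : ω g w = 0 := hiso hg w hw
      have h2 : ω h w = 0 := hh w (Submodule.mem_sup_right hw)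
      simp [h1, h2]
    have := hcompl.disjoint.le_bot ⟨hxN, hx⟩
    simpa using this
end

section
/- Let (V, ω) be a finite-dimensional symplectic vector space and let N, B ⊆ V be subspaces such that N + B = B^ω + B, and let F = B ∩ N. Then the bilinear form ω^B on N defined by ω^B(X₁, X₂) := ω(X₁ + b₁, X₂ + b₂), where bᵢ ∈ B are chosen so that Xᵢ + bᵢ ∈ B^ω, is well defined (independent of the choices of b₁, b₂), antisymmetric, and its kernel is exactly F = B ∩ N. -/
open Submodule

theorem symplOrth_eq_orthogonal {K V : Type*} [Field K] [AddCommGroup V] [Module K V]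
    (ω : V →ₗ[K] V →ₗ[K] K) (hskew : ∀ v w : V, ω v w = - ω w v) (W : Submodule K V) :
    symplOrth ω W = LinearMap.BilinForm.orthogonal ω W := by
  ext v
  constructor
  · intro h w hw
    have := h w hw
    simpa [LinearMap.BilinForm.IsOrtho, hskew w v] using this
  · intro h w hw
    have := h w hw
    change ω w v = 0 at this
    rw [hskew, this, neg_zero]

/-- assume `N + B = B^ω + B`.  Then the form
`ω^B(X₁, X₂) := ω(X₁ + b₁, X₂ + b₂)` on `N`, with `bᵢ ∈ B` chosen so that
`Xᵢ + bᵢ ∈ B^ω`, is well defined (independent of choices), antisymmetric, and its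
kernel is exactly `F = B ∩ N`. -/
theorem omegaB_well_defined_antisymm_kernel
    {K V : Type*} [Field K] [AddCommGroup V] [Module K V] [FiniteDimensional K V]
    (ω : V →ₗ[K] V →ₗ[K] K)
    (hskew : ∀ v w : V, ω v w = - ω w v)
    (hnondeg : ∀ v : V, (∀ w : V, ω v w = 0) → v = 0)
    (N B : Submodule K V)
    (hsum : N ⊔ B = symplOrth ω B ⊔ B) :
    -- well-definedness
    (∀ X₁ ∈ N, ∀ X₂ ∈ N, ∀ b₁ ∈ B, ∀ b₁' ∈ B, ∀ b₂ ∈ B, ∀ b₂' ∈ B,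
      X₁ + b₁ ∈ symplOrth ω B → X₁ + b₁' ∈ symplOrth ω B →
      X₂ + b₂ ∈ symplOrth ω B → X₂ + b₂' ∈ symplOrth ω B →
      ω (X₁ + b₁) (X₂ + b₂) = ω (X₁ + b₁') (X₂ + b₂')) ∧
    -- antisymmetry
    (∀ X₁ ∈ N, ∀ X₂ ∈ N, ∀ b₁ ∈ B, ∀ b₂ ∈ B,
      X₁ + b₁ ∈ symplOrth ω B → X₂ + b₂ ∈ symplOrth ω B →
      ω (X₁ + b₁) (X₂ + b₂) = - ω (X₂ + b₂) (X₁ + b₁)) ∧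
    -- the kernel of ω^B is exactly F = B ∩ N
    (∀ X₁ ∈ N,
      ((∀ X₂ ∈ N, ∀ b₁ ∈ B, ∀ b₂ ∈ B,
        X₁ + b₁ ∈ symplOrth ω B → X₂ + b₂ ∈ symplOrth ω B →
        ω (X₁ + b₁) (X₂ + b₂) = 0) ↔ X₁ ∈ B ⊓ N)) := by
  -- auxiliary: if z ∈ symplOrth ω B and b ∈ B then ω z b = 0 and ω b z = 0
  have horth : ∀ z ∈ symplOrth ω B, ∀ b ∈ B, ω z b = 0 := fun z hz b hb => hz b hb
  have horth' : ∀ z ∈ symplOrth ω B, ∀ b ∈ B, ω b z = 0 := by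
    intro z hz b hb
    rw [hskew, hz b hb, neg_zero]
  refine ⟨?_, ?_, ?_⟩
  · -- well-definedness
    intro X₁ h₁ X₂ h₂ b₁ hb₁ b₁' hb₁' b₂ hb₂ b₂' hb₂' hs₁ hs₁' hs₂ hs₂'
    have k1 := horth' (X₂ + b₂) hs₂ (b₁ - b₁') (B.sub_mem hb₁ hb₁')
    have k2 := horth (X₁ + b₁') hs₁' (b₂ - b₂') (B.sub_mem hb₂ hb₂')
    simp only [map_add, map_sub, LinearMap.add_apply, LinearMap.sub_apply] at k1 k2 ⊢
    linear_combination k1 + k2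
  · -- antisymmetry
    intro X₁ _ X₂ _ b₁ _ b₂ _ _ _
    exact hskew _ _
  · -- kernel
    intro X₁ h₁
    constructor
    · intro hker
      -- choose b₁ with X₁ + b₁ ∈ symplOrth ω B
      have hX₁ : X₁ ∈ symplOrth ω B ⊔ B := by
        rw [← hsum]; exact Submodule.mem_sup_left h₁
      obtain ⟨u, hu, b, hb, hub⟩ := Submodule.mem_sup.mp hX₁
      have hb₁ : (-b) ∈ B := B.neg_mem hb
      have hs₁ : X₁ + (-b) ∈ symplOrth ω B := by
        have : X₁ + (-b) = u := by rw [← hub]; abel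
        rw [this]; exact hu
      set Z := X₁ + (-b) with hZ
      -- Z is orthogonal to all of symplOrth ω B
      have hZorth : ∀ w ∈ symplOrth ω B, ω Z w = 0 := by
        intro w hw
        have hw' : w ∈ N ⊔ B := by rw [hsum]; exact Submodule.mem_sup_left hw
        obtain ⟨X₂, hX₂, b₂, hb₂, hwe⟩ := Submodule.mem_sup.mp hw'
        have hs₂ : X₂ + b₂ ∈ symplOrth ω B := by rw [hwe]; exact hw
        have := hker X₂ hX₂ (-b) hb₁ b₂ hb₂ hs₁ hs₂
        show ω (X₁ + -b) w = 0
        rw [← hwe]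
        exact this
      -- Z is also orthogonal to B, hence to symplOrth ω B ⊔ B ⊇ symplOrth ω (symplOrth ω B)... 
      -- In fact Z ∈ symplOrth ω (symplOrth ω B) = B ⊔ (B ∩ B^ω) ... use double orthogonal
      have hZmem : Z ∈ symplOrth ω (symplOrth ω B) := by
        intro w hw; exact hZorth w hw
      have hrefl : LinearMap.IsRefl ω := by
        intro x y h
        rw [hskew, h, neg_zero]
      have hdouble : symplOrth ω (symplOrth ω B) = B := by
        rw [symplOrth_eq_orthogonal ω hskew, symplOrth_eq_orthogonal ω hskew]
        exact LinearMap.BilinForm.orthogonal_orthogonal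
          ⟨hnondeg, fun y hy => hnondeg y (fun x => by rw [hskew, hy, neg_zero])⟩ hrefl B
      rw [hdouble] at hZmem
      have : X₁ ∈ B := by
        have : X₁ = Z + b := by rw [hZ]; abel
        rw [this]; exact B.add_mem hZmem hb
      exact ⟨this, h₁⟩
    · intro hX₁ X₂ hX₂ b₁ hb₁ b₂ hb₂ hs₁ hs₂
      -- X₁ ∈ B, so X₁ + b₁ ∈ B, and X₂ + b₂ ∈ symplOrth ω B
      have hXB : X₁ + b₁ ∈ B := B.add_mem hX₁.1 hb₁
      exact horth' (X₂ + b₂) hs₂ (X₁ + b₁) hXB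
end

section
/- Let (V, ω) be a finite-dimensional symplectic vector space and N, B ⊆ V subspaces with N + B = B^ω + B. Define ω^B on N as in the stretched construction: ω^B(X₁, X₂) = ω(X₁ + b₁, X₂ + b₂) with bᵢ ∈ B, Xᵢ + bᵢ ∈ B^ω. Then the quotient N/(B ∩ N) carries a well-defined nondegenerate antisymmetric bilinear form induced by ω^B. -/
open Submodule

/-!
Since `N ⊆ B^ω + B`, there is a linear map `σ : N → B^ω` with `σ X ≡ X (mod B)`. As `B` and
`B^ω` are `ω`-orthogonal, `ω^B(X₁, X₂) = ω(σ X₁, σ X₂)` for every admissible choice of `b₁, b₂`,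
so `ω^B` is bilinear and antisymmetric, and it vanishes on `B ∩ N`. Conversely, if `σ X` is
orthogonal to `σ N`, it is orthogonal to `N + B = B^ω + B`, hence lies in `(B^ω)^ω = B`, and
then `X ∈ B ∩ N`.
-/

section

variable {K V : Type*} [Field K] [AddCommGroup V] [Module K V]

theorem exists_linearMap_sub_mem_of_le_sup {W B N : Submodule K V} (h : N ≤ W ⊔ B) :
    ∃ σ : N →ₗ[K] W, ∀ X : N, (X : V) - σ X ∈ B := by
  set f := W.subtype.coprod B.subtype
  have hN : ∀ X : N, (X : V) ∈ LinearMap.range f := fun X => by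
    rw [← sup_eq_range]
    exact h X.2
  obtain ⟨g, hg⟩ := Module.projective_lifting_property f.rangeRestrict
    (LinearMap.codRestrict _ N.subtype hN) f.surjective_rangeRestrict
  refine ⟨LinearMap.fst K W B ∘ₗ g, fun X => ?_⟩
  have hX : ((g X).1 : V) + (g X).2 = X := congr_arg Subtype.val (LinearMap.congr_fun hg X)
  rw [LinearMap.comp_apply, LinearMap.fst_apply, ← hX, add_sub_cancel_left]
  exact (g X).2.2

variable {ω : V →ₗ[K] V →ₗ[K] K} {B : Submodule K V}

theorem apply_eq_of_sub_mem_right {u v v' : V} (hu : u ∈ symplOrth ω B) (hv : v - v' ∈ B) :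
    ω u v = ω u v' := by
  rw [← sub_eq_zero, ← map_sub]
  exact hu _ hv

theorem apply_eq_apply_of_sub_mem (hskew : ∀ v w : V, ω v w = - ω w v) {u u' v v' : V}
    (hv : v ∈ symplOrth ω B) (hu' : u' ∈ symplOrth ω B) (hu : u - u' ∈ B) (hv' : v - v' ∈ B) :
    ω u v = ω u' v' :=
  calc ω u v = ω u' v := by
        rw [← sub_eq_zero, ← LinearMap.sub_apply, ← map_sub, hskew, hv _ hu, neg_zero]
    _ = ω u' v' := apply_eq_of_sub_mem_right hu' hv'

theorem symplOrth_symplOrth [FiniteDimensional K V] (hskew : ∀ v w : V, ω v w = - ω w v)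
    (hnondeg : ∀ v : V, (∀ w : V, ω v w = 0) → v = 0) (B : Submodule K V) :
    symplOrth ω (symplOrth ω B) = B := by
  have hrefl : ω.IsRefl := fun x y h => by rw [hskew, h, neg_zero]
  have horth : ∀ W, symplOrth ω W = LinearMap.BilinForm.orthogonal ω W := fun W => by
    ext v
    refine forall₂_congr fun w _ => ?_
    rw [hskew, neg_eq_zero]
  rw [horth, horth, LinearMap.BilinForm.orthogonal_orthogonal
    (hrefl.nondegenerate_iff_separatingLeft.mpr hnondeg) hrefl]

theorem mem_of_forall_apply_eq_zero [FiniteDimensional K V] (hskew : ∀ v w : V, ω v w = - ω w v)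
    (hnondeg : ∀ v : V, (∀ w : V, ω v w = 0) → v = 0) {N : Submodule K V}
    (hsum : N ⊔ B = symplOrth ω B ⊔ B) {u : V} (hu : u ∈ symplOrth ω B)
    (huN : ∀ n ∈ N, ω u n = 0) : u ∈ B := by
  rw [← symplOrth_symplOrth hskew hnondeg B]
  intro w hw
  obtain ⟨n, hn, b, hb, rfl⟩ := mem_sup.mp (hsum.symm ▸ mem_sup_left hw : w ∈ N ⊔ B)
  rw [map_add, huN n hn, hu b hb, add_zero]

end

/-- with `N + B = B^ω + B`, the form `ω^B` on `N` descends to a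
well-defined nondegenerate antisymmetric bilinear form on the quotient `N/(B ∩ N)`. -/
theorem omegaB_descends_nondegenerate
    {K V : Type*} [Field K] [AddCommGroup V] [Module K V] [FiniteDimensional K V]
    (ω : V →ₗ[K] V →ₗ[K] K)
    (hskew : ∀ v w : V, ω v w = - ω w v)
    (hnondeg : ∀ v : V, (∀ w : V, ω v w = 0) → v = 0)
    (N B : Submodule K V)
    (hsum : N ⊔ B = symplOrth ω B ⊔ B) :
    ∃ β : ((↥N) ⧸ (comap N.subtype (B ⊓ N))) →ₗ[K]
          ((↥N) ⧸ (comap N.subtype (B ⊓ N))) →ₗ[K] K,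
      -- β is induced by ω^B
      (∀ X₁ X₂ : N, ∀ b₁ ∈ B, ∀ b₂ ∈ B,
        (X₁ : V) + b₁ ∈ symplOrth ω B → (X₂ : V) + b₂ ∈ symplOrth ω B →
        β (Submodule.Quotient.mk X₁) (Submodule.Quotient.mk X₂)
          = ω ((X₁ : V) + b₁) ((X₂ : V) + b₂)) ∧
      -- antisymmetric
      (∀ x y, β x y = - β y x) ∧
      -- nondegenerate
      (∀ x, (∀ y, β x y = 0) → x = 0) := by
  obtain ⟨σ, hσ⟩ :=
    exists_linearMap_sub_mem_of_le_sup (hsum ▸ le_sup_left : N ≤ symplOrth ω B ⊔ B)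
  set ωB : N →ₗ[K] N →ₗ[K] K := ω.compl₁₂ ((symplOrth ω B).subtype ∘ₗ σ)
    ((symplOrth ω B).subtype ∘ₗ σ)
  have hrefl : ωB.IsRefl := fun X Y h => by
    simp only [ωB, LinearMap.compl₁₂_apply] at h ⊢
    rw [hskew, h, neg_zero]
  have hker : comap N.subtype (B ⊓ N) ≤ LinearMap.ker ωB := fun X hX => by
    have hσX : (σ X : V) ∈ B := by simpa using sub_mem hX.1 (hσ X)
    refine LinearMap.ext fun Y => ?_
    simp only [ωB, LinearMap.compl₁₂_apply, LinearMap.comp_apply, coe_subtype,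
      LinearMap.zero_apply]
    rw [hskew, (σ Y).2 _ hσX, neg_zero]
  refine ⟨LinearMap.IsRefl.liftQ₂ ωB _ hrefl hker, ?_, ?_, ?_⟩
  · intro X₁ X₂ b₁ hb₁ b₂ hb₂ _ h₂
    have hB : ∀ (X : N) b, b ∈ B → (X : V) + b - σ X ∈ B := fun X b hb => by
      simpa only [add_sub_right_comm] using add_mem (hσ X) hb
    exact (apply_eq_apply_of_sub_mem hskew h₂ (σ X₁).2 (hB X₁ b₁ hb₁) (hB X₂ b₂ hb₂)).symm
  · intro x y
    obtain ⟨X, rfl⟩ := Submodule.Quotient.mk_surjective _ x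
    obtain ⟨Y, rfl⟩ := Submodule.Quotient.mk_surjective _ y
    exact hskew _ _
  · intro x hx
    obtain ⟨X, rfl⟩ := Submodule.Quotient.mk_surjective _ x
    have hσX : (σ X : V) ∈ B := mem_of_forall_apply_eq_zero hskew hnondeg hsum (σ X).2
      fun n hn => (apply_eq_of_sub_mem_right (σ X).2 (hσ ⟨n, hn⟩)).trans
        (hx (Submodule.Quotient.mk ⟨n, hn⟩))
    refine (Submodule.Quotient.mk_eq_zero _).mpr ⟨?_, X.2⟩
    simpa using add_mem hσX (hσ X)
end
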